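/- arXiv:1909.11522 — 9 statements merged into one kernel-verified Lean document; each statement's English description precedes it below -/
import Mathlib

section
/- For a weight vector a ∈ ℝ^n with strictly positive entries such that all 3^n sums ⟨x, a⟩ for x ∈ {-1,0,1}^n are distinct, the map sending a sign vector σ ∈ {-1,1}^n to the number of points x ∈ {0,1}^n with ⟨σ ⊙ a, x⟩ > 0 is a bijection from {-1,1}^n to {0, 1, ..., 2^n - 1}. -/
/-!
Flipping the signs of `σ` on the support of `x ∈ {0,1}ⁿ` gives a sign vector `τ` with
`⟨τ, a⟩ = ⟨σ, a⟩ - 2 ⟨σ ⊙ a, x⟩`. Hence `T(σ ⊙ a)` is the number of sign vectors `τ` with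
`⟨τ, a⟩ < ⟨σ, a⟩`, i.e. the rank of `⟨σ, a⟩` among the `2ⁿ` signed sums. These are pairwise
distinct by hypothesis, so the ranks are exactly `0, …, 2ⁿ - 1`.
-/

/-- The indicator vector of `x : Fin n → Bool` as a real vector. -/
noncomputable def ind {n : ℕ} (x : Fin n → Bool) : Fin n → ℝ :=
  fun i => if x i then 1 else 0

/-- Sign vector associated to `σ : Fin n → Bool`. -/
noncomputable def sgn {n : ℕ} (σ : Fin n → Bool) : Fin n → ℝ :=
  fun i => if σ i then 1 else -1

/-- Number of hypercube vertices strictly above the hyperplane with normal `w`. -/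
noncomputable def Tcount {n : ℕ} (w : Fin n → ℝ) : ℕ :=
  Nat.card {x : Fin n → Bool // 0 < ∑ i, w i * ind x i}

open Finset Function

section Rank

variable {α β : Type*} [Fintype α] [LinearOrder β] {c : α → β}

theorem card_filter_lt_lt_card_filter_lt {x y : α} (h : c x < c y) :
    #{z | c z < c x} < #{z | c z < c y} :=
  card_lt_card <| (ssubset_iff_of_subset fun z hz => by
    simp only [mem_filter, mem_univ, true_and] at hz ⊢; exact hz.trans h).2
    ⟨x, by simpa using h, by simp⟩

theorem card_filter_lt_lt_card (x : α) : #{z | c z < c x} < Fintype.card α :=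
  card_lt_univ_of_notMem (x := x) (by simp)

theorem bijOn_card_filter_lt (hc : Injective c) :
    Set.BijOn (fun x => #{z | c z < c x}) Set.univ (Set.Iio (Fintype.card α)) := by
  have hmaps : Set.MapsTo (fun x => #{z | c z < c x}) Set.univ (Set.Iio (Fintype.card α)) :=
    fun x _ => card_filter_lt_lt_card x
  have hinj : Set.InjOn (fun x => #{z | c z < c x}) Set.univ := by
    intro x _ y _ hxy
    rcases lt_trichotomy (c x) (c y) with h | h | h
    · exact absurd hxy (card_filter_lt_lt_card_filter_lt h).ne
    · exact hc h
    · exact absurd hxy (card_filter_lt_lt_card_filter_lt h).ne'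
  refine ⟨hmaps, hinj, ?_⟩
  simpa using surjOn_of_injOn_of_card_le (s := univ) (t := Iio (Fintype.card α)) _
    (by simpa using hmaps) (by simpa using hinj) (by simp)

end Rank

section Signs

variable {n : ℕ}

theorem sgn_eq_neg_one_or_zero_or_one (σ : Fin n → Bool) (i : Fin n) :
    sgn σ i = -1 ∨ sgn σ i = 0 ∨ sgn σ i = 1 := by
  unfold sgn; split_ifs <;> norm_num

theorem sgn_injective : Injective (sgn (n := n)) := by
  intro σ τ h
  funext i
  have hi := congrFun h i
  revert hi
  simp only [sgn]
  cases σ i <;> cases τ i <;> norm_num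

theorem sgn_xor (σ x : Fin n → Bool) (i : Fin n) :
    sgn (fun j => xor (x j) (σ j)) i = sgn σ i - 2 * sgn σ i * ind x i := by
  unfold sgn ind
  cases hσ : σ i <;> cases hx : x i <;> norm_num [hσ, hx]

noncomputable def signedSum (a : Fin n → ℝ) (σ : Fin n → Bool) : ℝ :=
  ∑ i, sgn σ i * a i

theorem signedSum_injective {a : Fin n → ℝ}
    (hdist : ∀ y z : Fin n → ℝ,
      (∀ i, y i = -1 ∨ y i = 0 ∨ y i = 1) → (∀ i, z i = -1 ∨ z i = 0 ∨ z i = 1) →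
      (∑ i, y i * a i) = (∑ i, z i * a i) → y = z) :
    Injective (signedSum a) := fun σ τ h =>
  sgn_injective <| hdist _ _ (sgn_eq_neg_one_or_zero_or_one σ)
    (sgn_eq_neg_one_or_zero_or_one τ) h

theorem signedSum_xor (a : Fin n → ℝ) (σ x : Fin n → Bool) :
    signedSum a (fun i => xor (x i) (σ i)) = signedSum a σ - 2 * ∑ i, sgn σ i * a i * ind x i := by
  simp only [signedSum, sgn_xor, mul_sum, ← sum_sub_distrib]
  exact sum_congr rfl fun i _ => by ring

theorem tcount_eq_card_filter_signedSum_lt (a : Fin n → ℝ) (σ : Fin n → Bool) :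
    Tcount (fun i => sgn σ i * a i) = #{τ | signedSum a τ < signedSum a σ} := by
  let flip : Equiv.Perm (Fin n → Bool) :=
    Involutive.toPerm (fun x i => xor (x i) (σ i)) fun x => funext fun i => by simp
  have hflip : ∀ x, 0 < ∑ i, sgn σ i * a i * ind x i ↔ signedSum a (flip x) < signedSum a σ :=
    fun x => by
      change _ ↔ signedSum a (fun i => xor (x i) (σ i)) < _
      rw [signedSum_xor]
      constructor <;> intro <;> linarith
  rw [Tcount, Nat.card_congr (flip.subtypeEquiv (q := (signedSum a · < signedSum a σ)) hflip),
    Nat.card_eq_fintype_card, Fintype.card_subtype]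

end Signs

theorem stmt_0_general {n : ℕ} (a : Fin n → ℝ)
    (hdist : ∀ y z : Fin n → ℝ,
      (∀ i, y i = -1 ∨ y i = 0 ∨ y i = 1) → (∀ i, z i = -1 ∨ z i = 0 ∨ z i = 1) →
      (∑ i, y i * a i) = (∑ i, z i * a i) → y = z) :
    Set.BijOn (fun σ : Fin n → Bool => Tcount (fun i => sgn σ i * a i))
      Set.univ (Set.Iio (2 ^ n)) := by
  simp only [tcount_eq_card_filter_signedSum_lt]
  simpa using bijOn_card_filter_lt (signedSum_injective hdist)

theorem stmt_0 {n : ℕ} (a : Fin n → ℝ) (ha : ∀ i, 0 < a i)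
    (hdist : ∀ y z : Fin n → ℝ,
      (∀ i, y i = -1 ∨ y i = 0 ∨ y i = 1) → (∀ i, z i = -1 ∨ z i = 0 ∨ z i = 1) →
      (∑ i, y i * a i) = (∑ i, z i * a i) → y = z) :
    Set.BijOn (fun σ : Fin n → Bool => Tcount (fun i => sgn σ i * a i))
      Set.univ (Set.Iio (2 ^ n)) :=
  stmt_0_general a hdist
end

section
/- Let a ∈ ℝ^n have strictly positive entries such that all 2^n subset sums of entries of a are pairwise distinct. For any sign vector σ ∈ {-1,1}^n, the number of x ∈ {0,1}^n with ⟨σ ⊙ a, x⟩ > 0 equals the number of subset sums s of a that are strictly less than the sum of those entries a_i for which σ_i = 1. -/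
/-- The subset sum of `a` indexed by `x`. -/
noncomputable def subsetSum {n : ℕ} (a : Fin n → ℝ) (x : Fin n → Bool) : ℝ :=
  ∑ i, ind x i * a i

theorem stmt_1 {n : ℕ} (a : Fin n → ℝ) (ha : ∀ i, 0 < a i)
    (hdist : Function.Injective (subsetSum a)) (σ : Fin n → Bool) :
    Nat.card {x : Fin n → Bool // 0 < ∑ i, (sgn σ i * a i) * ind x i}
      = Nat.card {x : Fin n → Bool // subsetSum a x < ∑ i, if σ i then a i else 0} := by
  have key : ∀ x : Fin n → Bool,
      subsetSum a (fun i => xor (x i) (σ i))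
        = (∑ i, if σ i then a i else 0) - ∑ i, (sgn σ i * a i) * ind x i := by
    intro x
    rw [subsetSum, ← Finset.sum_sub_distrib]
    refine Finset.sum_congr rfl fun i _ => ?_
    cases hσ : σ i <;> cases hx : x i <;> simp [ind, sgn, hσ, hx] <;> ring
  refine Nat.card_eq_of_bijective
    (fun p => ⟨fun i => xor (p.1 i) (σ i), by rw [key]; linarith [p.2]⟩) ?_
  constructor
  · rintro ⟨x, hx⟩ ⟨y, hy⟩ h
    simp only [Subtype.mk.injEq] at h ⊢
    funext i
    have := congrFun h i
    cases hσ : σ i <;> simp [hσ] at this <;> simp [this]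
  · rintro ⟨y, hy⟩
    refine ⟨⟨fun i => xor (y i) (σ i), ?_⟩, ?_⟩
    · have h := key (fun i => xor (y i) (σ i))
      have : (fun i => xor (xor (y i) (σ i)) (σ i)) = y := by
        funext i; cases σ i <;> simp
      rw [this] at h
      linarith [hy, h]
    · simp only [Subtype.mk.injEq]
      funext i; cases σ i <;> simp
end

section
/- Let P be a probability measure on ℝ^n that is invariant under reflection of any coordinate axis (i.e., under every diagonal matrix with ±1 entries), and suppose the set of w for which some nonzero sum ±w_{i1} ± ... ± w_{ik} equals zero has measure zero. Then for every t with 0 ≤ t < 2^n, the probability that |{x ∈ {0,1}^n : ⟨w, x⟩ > 0}| = t equals 2^{-n}. -/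
open MeasureTheory

namespace Stmt2Aux

variable {n : ℕ}

/-- coordinate flip map -/
def flip (ε : Fin n → Bool) (w : Fin n → ℝ) : Fin n → ℝ :=
  fun i => (if ε i then 1 else -1 : ℝ) * w i

/-- subset-sum function -/
noncomputable def uval (w : Fin n → ℝ) (x : Fin n → Bool) : ℝ := ∑ i, w i * ind x i

lemma sum_flip (w : Fin n → ℝ) (ε x : Fin n → Bool) :
    ∑ i, flip ε w i * ind x i = uval w ε - uval w (fun i => xor (ε i) (x i)) := by
  unfold uval
  rw [← Finset.sum_sub_distrib]
  apply Finset.sum_congr rfl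
  intro i _
  cases hε : ε i <;> cases hx : x i <;> simp [flip, ind, hε, hx] <;> ring

def Ties (n : ℕ) : Set (Fin n → ℝ) :=
  {w | ∃ y : Fin n → ℝ, (∀ i, y i = -1 ∨ y i = 0 ∨ y i = 1) ∧
      y ≠ 0 ∧ (∑ i, y i * w i) = 0}

lemma uval_inj {w : Fin n → ℝ} (hw : w ∉ Ties n) : Function.Injective (uval w) := by
  intro A B h
  by_contra hAB
  apply hw
  refine ⟨fun i => ind A i - ind B i, ?_, ?_, ?_⟩
  · intro i
    cases hA : A i <;> cases hB : B i <;> simp [ind, hA, hB]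
  · intro h0
    apply hAB
    funext i
    have := congrFun h0 i
    simp [ind] at this
    cases hA : A i <;> cases hB : B i <;> simp_all [ind, hA, hB]
  · have : ∑ i, (ind A i - ind B i) * w i = uval w A - uval w B := by
      unfold uval
      rw [← Finset.sum_sub_distrib]
      apply Finset.sum_congr rfl
      intro i _; ring
    rw [this, h, sub_self]

lemma tcount_flip (w : Fin n → ℝ) (ε : Fin n → Bool) :
    Tcount (flip ε w) = Nat.card {A : Fin n → Bool // uval w A < uval w ε} := by
  unfold Tcount
  refine Nat.card_congr (Equiv.subtypeEquiv
    ⟨fun x i => xor (ε i) (x i), fun x i => xor (ε i) (x i),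
      fun x => by funext i; simp, fun x => by funext i; simp⟩ fun x => ?_)
  rw [sum_flip, sub_pos]
  exact Iff.rfl


noncomputable def rnk (w : Fin n → ℝ) (ε : Fin n → Bool) : ℕ :=
  Nat.card {A : Fin n → Bool // uval w A < uval w ε}

lemma rnk_eq (w : Fin n → ℝ) (ε : Fin n → Bool) :
    rnk w ε = (Finset.univ.filter (fun A => uval w A < uval w ε)).card := by
  rw [rnk, Nat.card_eq_fintype_card, Fintype.card_subtype]

lemma rnk_lt (w : Fin n → ℝ) (ε : Fin n → Bool) : rnk w ε < 2 ^ n := by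
  rw [rnk_eq]
  have h : (Finset.univ.filter (fun A => uval w A < uval w ε)) ⊂ Finset.univ := by
    rw [Finset.ssubset_univ_iff]
    intro h
    have : ε ∈ Finset.univ.filter (fun A => uval w A < uval w ε) := by
      rw [h]; exact Finset.mem_univ ε
    simp at this
  calc _ < Finset.univ.card := Finset.card_lt_card h
    _ = 2 ^ n := by simp

lemma rnk_inj {w : Fin n → ℝ} (hw : w ∉ Ties n) : Function.Injective (rnk w) := by
  intro a b hab
  by_contra hne
  have huv : uval w a ≠ uval w b := fun h => hne (uval_inj hw h)
  wlog hlt : uval w a < uval w b generalizing a b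
  · exact this hab.symm (Ne.symm hne) huv.symm (lt_of_le_of_ne (not_lt.1 hlt) huv.symm)
  have hss : (Finset.univ.filter (fun A => uval w A < uval w a)) ⊂
      (Finset.univ.filter (fun A => uval w A < uval w b)) := by
    constructor
    · intro A hA
      simp only [Finset.mem_filter] at *
      exact ⟨hA.1, hA.2.trans hlt⟩
    · intro h
      have := h (by simp [hlt] : a ∈ _)
      simp at this
  have := Finset.card_lt_card hss
  rw [← rnk_eq, ← rnk_eq, hab] at this
  exact lt_irrefl _ this

lemma rnk_bij {w : Fin n → ℝ} (hw : w ∉ Ties n) {t : ℕ} (ht : t < 2 ^ n) :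
    ∃! ε : Fin n → Bool, rnk w ε = t := by
  have hbij : Function.Bijective (fun ε => (⟨rnk w ε, rnk_lt w ε⟩ : Fin (2 ^ n))) := by
    rw [Fintype.bijective_iff_injective_and_card]
    constructor
    · intro a b hab
      exact rnk_inj hw (by simpa using congrArg Fin.val hab)
    · simp
  obtain ⟨ε, hε⟩ := hbij.2 ⟨t, ht⟩
  refine ⟨ε, by simpa using congrArg Fin.val hε, fun ε' hε' => hbij.1 ?_⟩
  rw [hε]; exact Fin.ext (by simpa using hε')

lemma exists_unique_flip {w : Fin n → ℝ} (hw : w ∉ Ties n) {t : ℕ} (ht : t < 2 ^ n) :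
    ∃! ε : Fin n → Bool, Tcount (flip ε w) = t := by
  have := rnk_bij hw ht
  simpa only [rnk, ← tcount_flip] using this


lemma measurable_flip (ε : Fin n → Bool) : Measurable (flip ε) := by
  apply measurable_pi_lambda
  intro i
  exact (measurable_pi_apply i).const_mul _

lemma measurable_tcount : Measurable (Tcount (n := n)) := by
  have h : (Tcount (n := n)) = fun w =>
      ∑ x : Fin n → Bool, if 0 < ∑ i, w i * ind x i then 1 else 0 := by
    funext w
    rw [Tcount, Nat.card_eq_fintype_card, Fintype.card_subtype, Finset.card_filter]
  rw [h]
  apply Finset.measurable_sum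
  intro x _
  have hm : Measurable fun w : Fin n → ℝ => ∑ i, w i * ind x i :=
    Finset.measurable_sum _ fun i _ => (measurable_pi_apply i).mul_const _
  exact Measurable.ite (measurableSet_lt measurable_const hm) measurable_const measurable_const

lemma measurableSet_Ties : MeasurableSet (Ties n) := by
  have h : Ties n = ⋃ y ∈ {y : Fin n → ℝ | (∀ i, y i = -1 ∨ y i = 0 ∨ y i = 1) ∧ y ≠ 0},
      {w : Fin n → ℝ | ∑ i, y i * w i = 0} := by
    ext w
    simp only [Ties, Set.mem_setOf_eq, Set.mem_iUnion]
    constructor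
    · rintro ⟨y, h1, h2, h3⟩; exact ⟨y, ⟨h1, h2⟩, h3⟩
    · rintro ⟨y, ⟨h1, h2⟩, h3⟩; exact ⟨y, h1, h2, h3⟩
  rw [h]
  have hfin : {y : Fin n → ℝ | (∀ i, y i = -1 ∨ y i = 0 ∨ y i = 1) ∧ y ≠ 0}.Finite := by
    apply Set.Finite.subset (Set.Finite.pi (fun i : Fin n => (Set.finite_singleton (-1:ℝ)).insert 0 |>.insert 1))
    intro y hy
    intro i _
    rcases hy.1 i with h | h | h <;> simp [h]
  apply hfin.measurableSet_biUnion
  intro y _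
  have hm : Measurable fun w : Fin n → ℝ => ∑ i, y i * w i :=
    Finset.measurable_sum _ fun i _ => (measurable_pi_apply i).const_mul _
  exact hm (measurableSet_singleton 0)

end Stmt2Aux
theorem stmt_2 {n : ℕ} (P : Measure (Fin n → ℝ)) [IsProbabilityMeasure P]
    (hsym : ∀ ε : Fin n → Bool,
      Measure.map (fun w i => (if ε i then 1 else -1 : ℝ) * w i) P = P)
    (hties : P {w | ∃ y : Fin n → ℝ, (∀ i, y i = -1 ∨ y i = 0 ∨ y i = 1) ∧
      y ≠ 0 ∧ (∑ i, y i * w i) = 0} = 0)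
    (t : ℕ) (ht : t < 2 ^ n) :
    P {w | Tcount w = t} = ((2 : ENNReal) ^ n)⁻¹ := by
  classical
  set S := {w : Fin n → ℝ | Tcount w = t} with hS
  have hSm : MeasurableSet S := Stmt2Aux.measurable_tcount (measurableSet_singleton t)
  have hTiesm := Stmt2Aux.measurableSet_Ties (n := n)
  have hT0 : P (Stmt2Aux.Ties n) = 0 := hties
  set E : (Fin n → Bool) → Set (Fin n → ℝ) :=
    fun ε => Stmt2Aux.flip ε ⁻¹' S \ Stmt2Aux.Ties n with hE
  have hEm : ∀ ε, MeasurableSet (E ε) :=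
    fun ε => (hSm.preimage (Stmt2Aux.measurable_flip ε)).diff hTiesm
  have hPE : ∀ ε, P (E ε) = P S := by
    intro ε
    rw [hE]
    simp only
    rw [measure_diff_null hT0]
    have hsym' : Measure.map (Stmt2Aux.flip ε) P = P := hsym ε
    conv_rhs => rw [← hsym']
    rw [Measure.map_apply (Stmt2Aux.measurable_flip ε) hSm]
  have hdisj : Pairwise (Function.onFun Disjoint E) := by
    intro a b hab
    rw [Function.onFun, Set.disjoint_left]
    rintro w ⟨hwa, hwT⟩ ⟨hwb, _⟩
    obtain ⟨ε, hε, huniq⟩ := Stmt2Aux.exists_unique_flip hwT ht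
    exact hab ((huniq a hwa).trans (huniq b hwb).symm)
  have hcover : Set.univ ⊆ (⋃ ε, E ε) ∪ Stmt2Aux.Ties n := by
    intro w _
    by_cases hwT : w ∈ Stmt2Aux.Ties n
    · right; exact hwT
    · left
      obtain ⟨ε, hε, _⟩ := Stmt2Aux.exists_unique_flip hwT ht
      exact Set.mem_iUnion.2 ⟨ε, ⟨hε, hwT⟩⟩
  have h1 : P (⋃ ε, E ε) = 1 := by
    apply le_antisymm prob_le_one
    calc (1:ENNReal) = P Set.univ := measure_univ.symm
      _ ≤ P ((⋃ ε, E ε) ∪ Stmt2Aux.Ties n) := measure_mono hcover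
      _ ≤ P (⋃ ε, E ε) + P (Stmt2Aux.Ties n) := measure_union_le _ _
      _ = P (⋃ ε, E ε) := by rw [hT0, add_zero]
  have hmain : P S * (2 : ENNReal) ^ n = 1 := by
    rw [← h1, measure_iUnion hdisj hEm, tsum_fintype]
    simp only [hPE, Finset.sum_const, Finset.card_univ, nsmul_eq_mul]
    rw [mul_comm]
    congr 1
    simp
  exact ENNReal.eq_inv_of_mul_eq_one_left hmain
end

section
/- For i.i.d. standard Gaussian weights w ∈ ℝ^n, the number T = |{x ∈ {0,1}^n : ⟨w, x⟩ > 0}| is uniformly distributed on {0, 1, ..., 2^n - 1}. -/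
open MeasureTheory ProbabilityTheory

/-!
Flipping the signs of the weights on a set `S` preserves the Gaussian law and turns `T` into the
number of subsets whose `w`-sum exceeds that of `S`, i.e. the rank of `S` counted from the top.
Almost surely the `2^n` subset sums are distinct, so for each `t` exactly one `S` has rank `t`;
summing over `S`, the `2^n` equal probabilities `P(T = t)` add up to `1`.
-/

open Finset Matrix

namespace MeasureTheory.Measure

theorem AbsolutelyContinuous.pi_fin :
    ∀ {n : ℕ} {α : Fin n → Type*} [∀ i, MeasurableSpace (α i)] {μ ν : ∀ i, Measure (α i)}
      [∀ i, SigmaFinite (μ i)] [∀ i, SigmaFinite (ν i)], (∀ i, μ i ≪ ν i) →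
      Measure.pi μ ≪ Measure.pi ν
  | 0, _, _, μ, ν, _, _, _ => by rw [pi_of_empty μ, pi_of_empty ν]
  | n + 1, α, _, μ, ν, _, _, h => by
    rw [← (measurePreserving_piFinSuccAbove μ 0).symm.map_eq,
      ← (measurePreserving_piFinSuccAbove ν 0).symm.map_eq]
    exact ((h 0).prod (pi_fin fun i => h _)).map (MeasurableEquiv.measurable _)

end MeasureTheory.Measure

instance ProbabilityTheory.isNegInvariant_gaussianReal_zero (v : NNReal) :
    (gaussianReal 0 v).IsNegInvariant :=
  ⟨by rw [Measure.neg_def]; simpa using gaussianReal_map_neg (μ := 0) (v := v)⟩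

theorem measure_dotProduct_eq_zero {ι : Type*} [Fintype ι] {μ : Measure (ι → ℝ)}
    (hμ : μ ≪ volume) {v : ι → ℝ} (hv : v ≠ 0) : μ {w | w ⬝ᵥ v = 0} = 0 := by
  apply hμ
  have hker : {w : ι → ℝ | w ⬝ᵥ v = 0} = LinearMap.ker (dotProductBilin ℝ ℝ |>.flip v) := by
    ext w; simp
  rw [hker]
  refine Measure.addHaar_submodule _ _ fun htop => hv ?_
  have hvv : v ∈ LinearMap.ker (dotProductBilin ℝ ℝ |>.flip v) := htop ▸ Submodule.mem_top
  exact dotProduct_self_eq_zero.1 (by simpa using hvv)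

section UpperRank

variable {α β : Type*} [Fintype α] [LinearOrder β]

def upperRank (f : α → β) (a : α) : ℕ := #{b | f a < f b}

theorem upperRank_lt_card (f : α → β) (a : α) : upperRank f a < Fintype.card α :=
  card_lt_univ_of_notMem (x := a) (by simp)

theorem upperRank_lt_upperRank {f : α → β} {a a' : α} (h : f a < f a') :
    upperRank f a' < upperRank f a := by
  refine card_lt_card (ssubset_iff_of_subset ?_ |>.2 ⟨a', by simpa using h, by simp⟩)
  exact monotone_filter_right _ fun _ _ => h.trans

theorem upperRank_injective {f : α → β} (hf : Function.Injective f) :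
    Function.Injective (upperRank f) := by
  intro a a' h
  rcases lt_trichotomy (f a) (f a') with hlt | heq | hgt
  · exact absurd h (upperRank_lt_upperRank hlt).ne'
  · exact hf heq
  · exact absurd h (upperRank_lt_upperRank hgt).ne

theorem card_upperRank_eq_one {f : α → β} (hf : Function.Injective f) {t : ℕ}
    (ht : t < Fintype.card α) : #{a | upperRank f a = t} = 1 := by
  classical
  have himage : univ.image (upperRank f) = range (Fintype.card α) :=
    eq_of_subset_of_card_le (fun r hr => by
      obtain ⟨a, -, rfl⟩ := mem_image.1 hr; exact mem_range.2 (upperRank_lt_card f a))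
      (by rw [card_image_of_injective _ (upperRank_injective hf), card_range, card_univ])
  obtain ⟨a, -, rfl⟩ := mem_image.1 (himage ▸ mem_range.2 ht)
  exact card_eq_one.2 ⟨a, by ext b; simp [(upperRank_injective hf).eq_iff]⟩

end UpperRank

theorem measurable_upperRank {Ω α : Type*} [MeasurableSpace Ω] [Fintype α] {F : Ω → α → ℝ}
    (hF : ∀ a, Measurable fun ω => F ω a) (a : α) :
    Measurable fun ω => upperRank (F ω) a := by
  simp only [upperRank, card_filter]
  exact Finset.measurable_sum _ fun b _ =>
    Measurable.ite (measurableSet_lt (hF a) (hF b)) measurable_const measurable_const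

theorem sum_measure_upperRank_eq_one {Ω α : Type*} [MeasurableSpace Ω] {μ : Measure Ω}
    [IsProbabilityMeasure μ] [Fintype α] {F : Ω → α → ℝ} (hF : ∀ a, Measurable fun ω => F ω a)
    (hinj : ∀ᵐ ω ∂μ, Function.Injective (F ω)) {t : ℕ} (ht : t < Fintype.card α) :
    ∑ a, μ {ω | upperRank (F ω) a = t} = 1 := by
  have hmeas a : MeasurableSet {ω | upperRank (F ω) a = t} :=
    measurable_upperRank hF a (measurableSet_singleton t)
  calc ∑ a, μ {ω | upperRank (F ω) a = t}
      = ∫⁻ ω, ∑ a, {ω | upperRank (F ω) a = t}.indicator 1 ω ∂μ := by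
        rw [lintegral_finsetSum _ fun a _ => measurable_one.indicator (hmeas a)]
        simp only [lintegral_indicator_one (hmeas _)]
    _ = ∫⁻ _, 1 ∂μ := lintegral_congr_ae <| hinj.mono fun ω hω => by
        simp only [Set.indicator_apply, Set.mem_ofPred_eq, Pi.one_apply]
        rw [sum_boole, card_upperRank_eq_one hω ht, Nat.cast_one]
    _ = 1 := by simp

section SignFlip

variable {ι : Type*}

def signFlip (S : ι → Bool) (w : ι → ℝ) : ι → ℝ := fun i => if S i then -w i else w i

theorem measurePreserving_signFlip [Fintype ι] {μ : ι → Measure ℝ} [∀ i, SigmaFinite (μ i)]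
    [∀ i, (μ i).IsNegInvariant] (S : ι → Bool) :
    MeasurePreserving (signFlip S) (Measure.pi μ) (Measure.pi μ) :=
  measurePreserving_pi (f := fun i x => if S i then -x else x) μ μ fun i => by
    cases S i
    · exact MeasurePreserving.id (μ i)
    · exact Measure.measurePreserving_neg (μ i)

end SignFlip

section Hypercube

variable {n : ℕ}

theorem ind_injective : Function.Injective (ind (n := n)) := fun x y h => funext fun i => by
  have hi := congrFun h i
  revert hi
  simp only [ind]
  cases x i <;> cases y i <;> simp

theorem signFlip_dotProduct_ind (S x : Fin n → Bool) (w : Fin n → ℝ) :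
    signFlip S w ⬝ᵥ ind x = w ⬝ᵥ ind (fun i => xor (x i) (S i)) - w ⬝ᵥ ind S := by
  simp only [dotProduct, ← sum_sub_distrib]
  refine sum_congr rfl fun i _ => ?_
  simp only [signFlip, ind]
  rcases Bool.eq_false_or_eq_true (S i) with hS | hS <;>
    rcases Bool.eq_false_or_eq_true (x i) with hx | hx <;> simp [hS, hx]

theorem Tcount_signFlip (S : Fin n → Bool) (w : Fin n → ℝ) :
    Tcount (signFlip S w) = upperRank (fun x => w ⬝ᵥ ind x) S := by
  rw [Tcount, upperRank, ← Fintype.card_subtype, ← Nat.card_eq_fintype_card]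
  have hxor : Function.Involutive fun (x : Fin n → Bool) i => xor (x i) (S i) :=
    fun x => funext fun i => by simp
  refine Nat.card_congr (Equiv.subtypeEquiv hxor.toPerm fun x => ?_)
  change 0 < signFlip S w ⬝ᵥ ind x ↔ _
  rw [signFlip_dotProduct_ind, sub_pos]
  rfl

theorem Tcount_eq_upperRank (w : Fin n → ℝ) :
    Tcount w = upperRank (fun x => w ⬝ᵥ ind x) (fun _ => false) :=
  Tcount_signFlip (fun _ => false) w

theorem ae_injective_dotProduct_ind {μ : Measure (Fin n → ℝ)} (hμ : μ ≪ volume) :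
    ∀ᵐ w ∂μ, Function.Injective fun x : Fin n → Bool => w ⬝ᵥ ind x := by
  refine ae_all_iff.2 fun x => ae_all_iff.2 fun y => ?_
  by_cases hxy : x = y
  · exact ae_of_all _ fun _ _ => hxy
  have hnull := measure_dotProduct_eq_zero hμ (sub_ne_zero.2 (ind_injective.ne hxy))
  filter_upwards [measure_eq_zero_iff_ae_notMem.1 hnull] with w hw heq
  exact (hw (by rw [dotProduct_sub, heq, sub_self])).elim

end Hypercube

/-- For i.i.d. standard Gaussian weights, `T` is uniform on `{0, …, 2^n - 1}`. -/
theorem stmt_3 {n : ℕ} (t : ℕ) (ht : t < 2 ^ n) :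
    (Measure.pi fun _ : Fin n => gaussianReal 0 1) {w | Tcount w = t}
      = ((2 : ENNReal) ^ n)⁻¹ := by
  set μ := Measure.pi fun _ : Fin n => gaussianReal 0 1
  have hμ : μ ≪ volume := Measure.AbsolutelyContinuous.pi_fin fun _ =>
    gaussianReal_absolutelyContinuous 0 one_ne_zero
  have hF (x : Fin n → Bool) : Measurable fun w : Fin n → ℝ => w ⬝ᵥ ind x := by
    fun_prop
  have hTcount : MeasurableSet {w : Fin n → ℝ | Tcount w = t} := by
    simp_rw [Tcount_eq_upperRank]
    exact measurable_upperRank hF _ (measurableSet_singleton t)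
  have hflip (S : Fin n → Bool) :
      μ {w | upperRank (fun x => w ⬝ᵥ ind x) S = t} = μ {w | Tcount w = t} := by
    simp_rw [← Tcount_signFlip]
    exact (measurePreserving_signFlip S).measure_preimage hTcount.nullMeasurableSet
  have hsum := sum_measure_upperRank_eq_one hF (ae_injective_dotProduct_ind hμ)
    (t := t) (by simpa using ht)
  simp only [hflip, sum_const, card_univ, Fintype.card_fun, Fintype.card_bool,
    Fintype.card_fin, nsmul_eq_mul] at hsum
  exact ENNReal.eq_inv_of_mul_eq_one_left (by rw [mul_comm]; exact_mod_cast hsum)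
end

section
/- Let C(n,t) be defined by C(n,0)=0, C(n,2^n)=0, C(n,1)=n−1, C(n,2^n−1)=n−1, and C(n,t) = C(n−1,⌈t/2⌉) + C(n−1,⌊t/2⌋) + 2 otherwise. Then for all n ≥ 2, if t + 1 ≤ 2^{n−1} then C(n,t) < C(n,t+1). -/
/-- The recursive complexity bound `C(n,t)`:
`C(n,0) = C(n,2^n) = 0`, `C(n,1) = C(n,2^n-1) = n-1`, and otherwise
`C(n,t) = C(n-1,⌈t/2⌉) + C(n-1,⌊t/2⌋) + 2`. -/
def C : ℕ → ℕ → ℕ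
  | _, 0 => 0
  | n, 1 => n - 1
  | 0, _ + 2 => 0
  | n + 1, t + 2 =>
    if t + 2 = 2 ^ (n + 1) then 0
    else if t + 2 = 2 ^ (n + 1) - 1 then n
    else C n ((t + 3) / 2) + C n ((t + 2) / 2) + 2

lemma C_rec (m t : ℕ) (h1 : t + 2 ≠ 2 ^ (m + 1)) (h2 : t + 2 ≠ 2 ^ (m + 1) - 1) :
    C (m + 1) (t + 2) = C m ((t + 3) / 2) + C m ((t + 2) / 2) + 2 := by
  rw [C, if_neg h1, if_neg h2]

/-- Monotonicity of `C(n,·)` on `{0, …, 2^(n-1)}`. -/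
theorem stmt_6 (n t : ℕ) (hn : 2 ≤ n) (ht : t + 1 ≤ 2 ^ (n - 1)) :
    C n t < C n (t + 1) := by
  induction n generalizing t with
  | zero => omega
  | succ m ih =>
    have hm : 1 ≤ m := by omega
    have hp : 2 ≤ 2 ^ m := by
      calc 2 = 2 ^ 1 := rfl
      _ ≤ 2 ^ m := Nat.pow_le_pow_right (by norm_num) hm
    simp only [Nat.add_sub_cancel] at ht
    match t with
    | 0 =>
      show C (m + 1) 0 < C (m + 1) 1
      show 0 < m + 1 - 1
      omega
    | 1 =>
      have h1 : (2 : ℕ) + 2 - 2 ≠ 2 ^ (m + 1) := by simp; omega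
      have h2 : (2 : ℕ) ≠ 2 ^ (m + 1) - 1 := by omega
      have := C_rec m 0 (by omega) (by omega)
      norm_num at this
      show C (m + 1) 1 < C (m + 1) 2
      rw [show C (m+1) 1 = m + 1 - 1 from rfl, this,
        show C m 1 = m - 1 by simp [C]]
      omega
    | s + 2 =>
      -- here s + 3 ≤ 2 ^ m, so 2 ^ m ≥ 3, hence m ≥ 2
      have hm2 : 2 ≤ m := by
        by_contra h
        interval_cases m <;> omega
      have hp2 : 2 * 2 ^ (m - 1) = 2 ^ m := by
        rw [← pow_succ']; congr 1; omega
      have hlt : s + 3 < 2 ^ (m + 1) - 1 := by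
        have : 2 ^ (m + 1) = 2 * 2 ^ m := by rw [pow_succ']
        omega
      have e1 := C_rec m s (by omega) (by omega)
      have e2 := C_rec m (s + 1) (by omega) (by omega)
      rcases Nat.even_or_odd s with ⟨k, hk⟩ | ⟨k, hk⟩
      · -- s = k + k (even)
        have d1 : (s + 3) / 2 = k + 1 := by omega
        have d2 : (s + 2) / 2 = k + 1 := by omega
        have d3 : (s + 1 + 3) / 2 = k + 2 := by omega
        have d4 : (s + 1 + 2) / 2 = k + 1 := by omega
        rw [d1, d2] at e1
        rw [d3, d4] at e2
        rw [show s + 2 + 1 = s + 1 + 2 from rfl, e1, e2]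
        have key : C m (k + 1) < C m (k + 2) := ih (k + 1) hm2 (by omega)
        omega
      · -- s = 2k+1 (odd)
        have d1 : (s + 3) / 2 = k + 2 := by omega
        have d2 : (s + 2) / 2 = k + 1 := by omega
        have d3 : (s + 1 + 3) / 2 = k + 2 := by omega
        have d4 : (s + 1 + 2) / 2 = k + 2 := by omega
        rw [d1, d2] at e1
        rw [d3, d4] at e2
        rw [show s + 2 + 1 = s + 1 + 2 from rfl, e1, e2]
        have key : C m (k + 1) < C m (k + 2) := ih (k + 1) hm2 (by omega)
        omega
end

section
/- For a perceptron on n inputs with weights w_i sampled i.i.d. uniformly on [−1,1] and no bias term, the probability that the induced Boolean function on {0,1}^n equals the alternating function f̃, where f̃ is the function realized exactly when w_n > 0, w_i < 0 for all i ≠ n, and Σ_j w_j > 0, equals 2^{-n}/n!. -/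
open MeasureTheory

/-- The uniform probability measure on `[-1,1]`. -/
noncomputable def unif : Measure ℝ :=
  ((2 : ENNReal))⁻¹ • volume.restrict (Set.Icc (-1 : ℝ) 1)

instance : IsProbabilityMeasure unif := by
  constructor
  simp [unif, Real.volume_Icc]
  rw [show (1 : ℝ) + 1 = 2 by ring, ENNReal.ofReal_ofNat, ENNReal.inv_mul_cancel] <;> simp

noncomputable def G (n : ℕ) (t : ℝ) : ENNReal :=
  (Measure.pi fun _ : Fin n => unif) {w | (∀ i, w i < 0) ∧ 0 < t + ∑ i, w i}

lemma measurableSet_G (n : ℕ) (t : ℝ) :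
    MeasurableSet {w : Fin n → ℝ | (∀ i, w i < 0) ∧ 0 < t + ∑ i, w i} := by
  have h1 : MeasurableSet {w : Fin n → ℝ | ∀ i, w i < 0} := by
    rw [Set.setOf_forall]
    exact MeasurableSet.iInter fun i => measurableSet_lt (measurable_pi_apply i) measurable_const
  have h2 : MeasurableSet {w : Fin n → ℝ | 0 < t + ∑ i, w i} :=
    measurableSet_lt measurable_const
      (measurable_const.add (Finset.measurable_sum _ fun i _ => measurable_pi_apply i))
  exact h1.inter h2

lemma G_nonpos (n : ℕ) {t : ℝ} (ht : t ≤ 0) : G n t = 0 := by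
  have : {w : Fin n → ℝ | (∀ i, w i < 0) ∧ 0 < t + ∑ i, w i} = ∅ := by
    ext w
    simp only [Set.mem_setOf_eq, Set.mem_empty_iff_false, iff_false, not_and]
    intro hw
    have hsum : ∑ i, w i ≤ 0 := Finset.sum_nonpos fun i _ => (hw i).le
    linarith
  rw [G, this, measure_empty]

lemma decomp (n : ℕ) (t : ℝ) (P : ℝ → Prop) (hP : MeasurableSet {x | P x}) :
    (Measure.pi fun _ : Fin (n + 1) => unif)
      {w | P (w (Fin.last n)) ∧ (∀ i, i ≠ Fin.last n → w i < 0) ∧ 0 < t + ∑ i, w i}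
    = 2⁻¹ * ∫⁻ x in Set.Icc (-1 : ℝ) 1,
        ({x : ℝ | P x}.indicator (fun x => G n (t + x)) x) := by
  classical
  set S : Set (ℝ × (Fin n → ℝ)) :=
    {p | P p.1 ∧ (∀ j, p.2 j < 0) ∧ 0 < t + p.1 + ∑ j, p.2 j} with hS
  have hSm : MeasurableSet S := by
    apply MeasurableSet.inter (hP.preimage measurable_fst)
    apply MeasurableSet.inter
    · show MeasurableSet {p : ℝ × (Fin n → ℝ) | ∀ j, p.2 j < 0}
      rw [Set.setOf_forall]
      exact MeasurableSet.iInter fun j =>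
        measurableSet_lt (measurable_snd.eval) measurable_const
    · exact measurableSet_lt measurable_const
        ((measurable_const.add measurable_fst).add
          ((Finset.measurable_sum _ fun j _ => measurable_pi_apply j).comp measurable_snd))
  have hmp := measurePreserving_piFinSuccAbove (fun _ : Fin (n + 1) => unif) (Fin.last n)
  have hpre : (MeasurableEquiv.piFinSuccAbove (fun _ : Fin (n + 1) => ℝ) (Fin.last n)) ⁻¹' S
      = {w | P (w (Fin.last n)) ∧ (∀ i, i ≠ Fin.last n → w i < 0) ∧ 0 < t + ∑ i, w i} := by
    ext w
    simp only [Set.mem_preimage, MeasurableEquiv.piFinSuccAbove, MeasurableEquiv.coe_mk,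
      Fin.insertNthEquiv, Equiv.coe_fn_symm_mk, hS, Set.mem_setOf_eq, Fin.removeNth,
      Fin.succAbove_last]
    constructor
    · rintro ⟨h1, h2, h3⟩
      refine ⟨h1, ?_, ?_⟩
      · intro i hi
        obtain ⟨j, rfl⟩ := Fin.exists_castSucc_eq.2 hi
        exact h2 j
      · rw [Fin.sum_univ_castSucc]
        linarith
    · rintro ⟨h1, h2, h3⟩
      refine ⟨h1, fun j => h2 _ (Fin.castSucc_lt_last j).ne, ?_⟩
      rw [Fin.sum_univ_castSucc] at h3
      linarith
  rw [← hpre, hmp.measure_preimage hSm.nullMeasurableSet,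
    Measure.prod_apply hSm]
  have hker : ∀ x : ℝ, (Measure.pi fun _ : Fin n => unif) (Prod.mk x ⁻¹' S)
      = ({x : ℝ | P x}.indicator (fun x => G n (t + x)) x) := by
    intro x
    by_cases hx : P x
    · rw [Set.indicator_apply, if_pos (by exact hx)]
      congr 1
      ext w
      simp only [S, Set.mem_preimage, Set.mem_setOf_eq, hx, true_and, G, add_assoc]
    · rw [Set.indicator_apply, if_neg (by exact hx)]
      have : Prod.mk x ⁻¹' S = ∅ := by
        ext w; simp [S, hx]
      rw [this, measure_empty]
  simp only [hker]
  rw [unif, lintegral_smul_measure, smul_eq_mul]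

lemma real_int (n : ℕ) (a b : ℝ) (hab : a ≤ b) :
    ∫ x in Set.Ioo a b, (x - a) ^ n / n.factorial
      = (b - a) ^ (n + 1) / (n + 1).factorial := by
  rw [← MeasureTheory.integral_Ioc_eq_integral_Ioo, ← intervalIntegral.integral_of_le hab,
    intervalIntegral.integral_div,
    intervalIntegral.integral_comp_sub_right (fun x => x ^ n) a, sub_self,
    integral_pow, zero_pow (Nat.succ_ne_zero n), sub_zero, Nat.factorial_succ]
  have h1 : ((n : ℝ) + 1) ≠ 0 := by positivity
  have h2 : ((n.factorial : ℝ)) ≠ 0 := Nat.cast_ne_zero.2 n.factorial_ne_zero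
  push_cast
  field_simp

lemma lint_gen (n : ℕ) (a b : ℝ) (hab : a ≤ b) :
    ∫⁻ x in Set.Ioo a b, ENNReal.ofReal ((x - a) ^ n / n.factorial)
      = ENNReal.ofReal ((b - a) ^ (n + 1) / (n + 1).factorial) := by
  rw [← real_int n a b hab, ← ofReal_integral_eq_lintegral_ofReal]
  · exact (Continuous.integrableOn_Icc (by continuity)).mono_set Set.Ioo_subset_Icc_self
  · filter_upwards [ae_restrict_mem measurableSet_Ioo] with x hx
    have : (0:ℝ) ≤ x - a := by linarith [hx.1]
    positivity

lemma G_formula : ∀ (n : ℕ) (t : ℝ), 0 < t → t ≤ 1 →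
    G n t = ENNReal.ofReal (t ^ n / n.factorial) * 2⁻¹ ^ n := by
  intro n
  induction n with
  | zero =>
    intro t ht _
    have : {w : Fin 0 → ℝ | (∀ i, w i < 0) ∧ 0 < t + ∑ i, w i} = Set.univ := by
      ext w
      simp [ht]
    rw [G, this, measure_univ]
    simp
  | succ n ih =>
    intro t ht ht1
    have hset : {w : Fin (n + 1) → ℝ | (∀ i, w i < 0) ∧ 0 < t + ∑ i, w i}
        = {w | (w (Fin.last n) < 0) ∧ (∀ i, i ≠ Fin.last n → w i < 0) ∧ 0 < t + ∑ i, w i} := by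
      ext w
      simp only [Set.mem_setOf_eq]
      constructor
      · rintro ⟨h1, h2⟩
        exact ⟨h1 _, fun i _ => h1 i, h2⟩
      · rintro ⟨h1, h2, h3⟩
        refine ⟨fun i => ?_, h3⟩
        by_cases hi : i = Fin.last n
        · subst hi; exact h1
        · exact h2 i hi
    rw [G, hset, decomp n t (fun x => x < 0) (measurableSet_lt measurable_id measurable_const)]
    have hind : ∀ x : ℝ, ({x : ℝ | x < 0}.indicator (fun x => G n (t + x)) x)
        = (Set.Ioo (-t) 0).indicator
            (fun x => ENNReal.ofReal ((t + x) ^ n / n.factorial) * 2⁻¹ ^ n) x := by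
      intro x
      by_cases hx : x < 0
      · rw [Set.indicator_of_mem (by exact hx)]
        by_cases hx2 : -t < x
        · rw [Set.indicator_of_mem (Set.mem_Ioo.2 ⟨hx2, hx⟩)]
          exact ih (t + x) (by linarith) (by linarith)
        · rw [Set.indicator_of_notMem (fun h => hx2 h.1)]
          exact G_nonpos n (by push_neg at hx2; linarith)
      · rw [Set.indicator_of_notMem (by exact hx), Set.indicator_of_notMem (fun h => hx h.2)]
    simp only [hind]
    have hm : Measurable fun x : ℝ => ENNReal.ofReal ((t + x) ^ n / (n.factorial : ℝ)) :=
      (((measurable_const.add measurable_id').pow_const n).div_const _).ennreal_ofReal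
    rw [lintegral_indicator measurableSet_Ioo, Measure.restrict_restrict measurableSet_Ioo,
      Set.inter_eq_self_of_subset_left
        (Set.Ioo_subset_Icc_self.trans (Set.Icc_subset_Icc (by linarith) (by linarith))),
      lintegral_mul_const _ hm]
    have heq : (fun x : ℝ => ENNReal.ofReal ((t + x) ^ n / n.factorial))
        = fun x : ℝ => ENNReal.ofReal ((x - (-t)) ^ n / n.factorial) := by
      funext x; ring_nf
    rw [heq, lint_gen n (-t) 0 (by linarith)]
    rw [show (0:ℝ) - (-t) = t by ring]
    rw [pow_succ']
    ring

/-- For i.i.d. `Uniform[-1,1]` weights on `n+1` inputs, the probability of the event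
realizing the alternating function `f̃ = "0101…01"` (namely `w_last > 0`, `w_i < 0` for
all other `i`, and `∑ w_j > 0`) equals `2^{-(n+1)}/(n+1)!`. -/
theorem stmt_8 (n : ℕ) :
    (Measure.pi fun _ : Fin (n + 1) => unif)
      {w | 0 < w (Fin.last n) ∧ (∀ i : Fin (n + 1), i ≠ Fin.last n → w i < 0) ∧
        0 < ∑ j, w j}
      = ((2 : ENNReal) ^ (n + 1) * (Nat.factorial (n + 1) : ENNReal))⁻¹ := by
  have hset : {w : Fin (n + 1) → ℝ | 0 < w (Fin.last n)
        ∧ (∀ i : Fin (n + 1), i ≠ Fin.last n → w i < 0) ∧ 0 < ∑ j, w j}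
      = {w | (0 < w (Fin.last n)) ∧ (∀ i, i ≠ Fin.last n → w i < 0)
          ∧ 0 < (0:ℝ) + ∑ i, w i} := by
    simp only [zero_add]
  rw [hset, decomp n 0 (fun x => 0 < x) (measurableSet_lt measurable_const measurable_id)]
  have hind : ∀ x ∈ Set.Icc (-1:ℝ) 1,
      ({x : ℝ | 0 < x}.indicator (fun x => G n (0 + x)) x)
        = (Set.Ioc (0:ℝ) 1).indicator
            (fun x => ENNReal.ofReal (x ^ n / n.factorial) * 2⁻¹ ^ n) x := by
    intro x hx
    by_cases hx0 : 0 < x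
    · rw [Set.indicator_of_mem (by exact hx0), Set.indicator_of_mem (Set.mem_Ioc.2 ⟨hx0, hx.2⟩), zero_add]
      exact G_formula n x hx0 hx.2
    · rw [Set.indicator_of_notMem (by exact hx0),
        Set.indicator_of_notMem (fun h => hx0 h.1)]
  rw [setLIntegral_congr_fun measurableSet_Icc hind,
    lintegral_indicator measurableSet_Ioc, Measure.restrict_restrict measurableSet_Ioc,
    Set.inter_eq_self_of_subset_left
      (Set.Ioc_subset_Icc_self.trans (Set.Icc_subset_Icc (by norm_num) le_rfl)),
    Measure.restrict_congr_set MeasureTheory.Ioo_ae_eq_Ioc.symm]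
  have hm : Measurable fun x : ℝ => ENNReal.ofReal (x ^ n / (n.factorial : ℝ)) :=
    ((measurable_id'.pow_const n).div_const _).ennreal_ofReal
  rw [lintegral_mul_const _ hm]
  have heq : (fun x : ℝ => ENNReal.ofReal (x ^ n / (n.factorial : ℝ)))
      = fun x : ℝ => ENNReal.ofReal ((x - 0) ^ n / (n.factorial : ℝ)) := by
    funext x; rw [sub_zero]
  rw [heq, lint_gen n 0 1 (by norm_num), sub_zero, one_pow, one_div,
    ENNReal.ofReal_inv_of_pos (by positivity), ENNReal.ofReal_natCast,
    ENNReal.mul_inv (Or.inr (ENNReal.natCast_ne_top _))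
      (Or.inl (ENNReal.pow_ne_top ENNReal.ofNat_ne_top)),
    ← ENNReal.inv_pow, pow_succ']
  rw [ENNReal.mul_inv (Or.inl (by norm_num : (2:ENNReal) ≠ 0)) (Or.inl ENNReal.ofNat_ne_top)]
  ring
end

section
/- A feedforward neural network with one hidden layer of 2^{n−1} ReLU neurons (with bias terms) and one threshold output neuron can express every Boolean function f : {0,1}^n → {0,1}. -/
open Finset

namespace ReluNet

variable {n : ℕ}

noncomputable def pointWeight (y : Fin n → Bool) : Fin n → ℝ :=
  fun i => 2 * ind y i - 1

noncomputable def pointBias (y : Fin n → Bool) : ℝ :=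
  1 - ∑ i, ind y i

theorem sum_pointWeight_mul_ind_add_pointBias (x y : Fin n → Bool) :
    ∑ i, pointWeight y i * ind x i + pointBias y = 1 - hammingDist x y := by
  have hcoord : ∀ i, pointWeight y i * ind x i - ind y i = -(if x i ≠ y i then 1 else 0) := by
    intro i
    cases hx : x i <;> cases hy : y i <;> norm_num [pointWeight, ind, hx, hy]
  have hsum := sum_congr rfl fun i (_ : i ∈ univ) => hcoord i
  rw [sum_sub_distrib, sum_neg_distrib, sum_boole] at hsum
  rw [pointBias, hammingDist]
  linarith

theorem relu_point_eq_ite (x y : Fin n → Bool) :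
    max 0 (∑ i, pointWeight y i * ind x i + pointBias y) = if x = y then 1 else 0 := by
  rw [sum_pointWeight_mul_ind_add_pointBias]
  split_ifs with hxy
  · simp [hxy]
  · have : (1 : ℝ) ≤ hammingDist x y := by exact_mod_cast hammingDist_pos.mpr hxy
    exact max_eq_left (by linarith)

theorem exists_sum_mul_ite_eq_ite_mem {α : Type*} [DecidableEq α] [Inhabited α] {m : ℕ}
    (S : Finset α) (hS : #S ≤ m) (c : ℝ) :
    ∃ (p : Fin m → α) (w : Fin m → ℝ),
      ∀ x, ∑ j, w j * (if x = p j then 1 else 0) = if x ∈ S then c else 0 := by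
  obtain ⟨k, rfl⟩ := Nat.exists_eq_add_of_le hS
  refine ⟨Fin.append (fun j => S.equivFin.symm j) fun _ => default,
    Fin.append (fun _ => c) 0, fun x => ?_⟩
  rw [Fin.sum_univ_add]
  simp only [Fin.append_left, Fin.append_right, Pi.zero_apply, zero_mul, sum_const_zero,
    add_zero]
  rw [Equiv.sum_comp S.equivFin.symm fun y : S => c * if x = y then 1 else 0,
    Finset.sum_coe_sort S fun y => c * if x = y then 1 else 0]
  simp

noncomputable def reluNet {m : ℕ} (w₁ : Fin m → Fin n → ℝ) (b₁ : Fin m → ℝ) (w₂ : Fin m → ℝ)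
    (x : Fin n → Bool) : ℝ :=
  ∑ j, w₂ j * max 0 (∑ i, w₁ j i * ind x i + b₁ j)

theorem exists_reluNet_eq_ite_mem {m : ℕ} (S : Finset (Fin n → Bool)) (hS : #S ≤ m) (c : ℝ) :
    ∃ (w₁ : Fin m → Fin n → ℝ) (b₁ : Fin m → ℝ) (w₂ : Fin m → ℝ),
      ∀ x, reluNet w₁ b₁ w₂ x = if x ∈ S then c else 0 := by
  obtain ⟨p, w, hpw⟩ := exists_sum_mul_ite_eq_ite_mem S hS c
  exact ⟨fun j => pointWeight (p j), fun j => pointBias (p j), w, fun x => by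
    simp only [reluNet, relu_point_eq_ite, hpw]⟩

end ReluNet

theorem Finset.card_le_or_card_compl_le {α : Type*} [Fintype α] [DecidableEq α] (S : Finset α)
    {m : ℕ} (h : Fintype.card α ≤ 2 * m) : #S ≤ m ∨ #Sᶜ ≤ m := by
  have := card_add_card_compl S
  omega

open ReluNet in
/-- A one-hidden-layer ReLU network with `2^(n-1)` hidden neurons (with biases) and a
threshold output unit can express every Boolean function on `{0,1}^n`. -/
theorem stmt_9 {n : ℕ} (f : (Fin n → Bool) → Bool) :
    ∃ (w₁ : Fin (2 ^ (n - 1)) → Fin n → ℝ) (b₁ : Fin (2 ^ (n - 1)) → ℝ)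
      (w₂ : Fin (2 ^ (n - 1)) → ℝ) (b₂ : ℝ),
      ∀ x : Fin n → Bool,
        (0 < ∑ j, w₂ j * max 0 (∑ i, w₁ j i * ind x i + b₁ j) + b₂) ↔ f x = true := by
  have hcard : Fintype.card (Fin n → Bool) ≤ 2 * 2 ^ (n - 1) := by
    rw [Fintype.card_fun, Fintype.card_bool, Fintype.card_fin, ← pow_succ']
    exact Nat.pow_le_pow_right two_pos (by omega)
  rcases card_le_or_card_compl_le {x | f x = true} hcard with hS | hS
  · obtain ⟨w₁, b₁, w₂, hnet⟩ := exists_reluNet_eq_ite_mem _ hS 1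
    refine ⟨w₁, b₁, w₂, -1 / 2, fun x => ?_⟩
    rw [← reluNet, hnet]
    by_cases hfx : f x = true <;> norm_num [hfx]
  · obtain ⟨w₁, b₁, w₂, hnet⟩ := exists_reluNet_eq_ite_mem _ hS (-1)
    refine ⟨w₁, b₁, w₂, 1 / 2, fun x => ?_⟩
    rw [← reluNet, hnet]
    by_cases hfx : f x = true <;> norm_num [hfx]
end

section
/- Define the map φ(ρ) = (1/π)( sin(arccos ρ) + (π − arccos ρ)·ρ ) for ρ ∈ [0,1]. Then φ(1) = 1, and for all ρ ∈ [0,1), φ is strictly increasing, has derivative strictly less than 1, and satisfies φ(ρ) > ρ. -/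
open Real

/-- The ReLU correlation map of the infinite-width Gaussian process limit. -/
noncomputable def phi (ρ : ℝ) : ℝ :=
  (1 / π) * (Real.sin (Real.arccos ρ) + (π - Real.arccos ρ) * ρ)

/-!
On `(-1, 1)` the derivative of `φ` is `1 - arccos ρ / π`, which lies strictly between
`0` and `1`. Hence both `φ` and `ρ ↦ ρ - φ ρ` are strictly increasing on `[-1, 1]`, and since
`φ 1 = 1`, the latter is negative on `[-1, 1)`, i.e. `ρ < φ ρ` there.
-/

theorem phi_one : phi 1 = 1 := by
  simp [phi, arccos_one, pi_ne_zero]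

theorem continuous_phi : Continuous phi := by
  unfold phi
  fun_prop

theorem hasDerivAt_phi {x : ℝ} (h₁ : -1 < x) (h₂ : x < 1) :
    HasDerivAt phi ((π - arccos x) / π) x := by
  have harccos := hasDerivAt_arccos h₁.ne' h₂.ne
  have h := (((hasDerivAt_sin _).comp x harccos).add
    (((hasDerivAt_const x π).sub harccos).mul (hasDerivAt_id x))).const_mul (1 / π)
  refine h.congr_deriv ?_
  -- the two `1 / √(1 - x²)` terms cancel because `cos (arccos x) = x`
  dsimp only [Pi.sub_apply, id]
  rw [cos_arccos h₁.le h₂.le]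
  field_simp [pi_ne_zero]
  ring

theorem strictMonoOn_phi : StrictMonoOn phi (Set.Icc (-1) 1) := by
  refine strictMonoOn_of_deriv_pos (convex_Icc _ _) continuous_phi.continuousOn fun x hx => ?_
  rw [interior_Icc] at hx
  rw [(hasDerivAt_phi hx.1 hx.2).deriv]
  exact div_pos (sub_pos.mpr (arccos_lt_pi.mpr hx.1)) pi_pos

theorem strictMonoOn_sub_phi : StrictMonoOn (fun x => x - phi x) (Set.Icc (-1) 1) := by
  refine strictMonoOn_of_deriv_pos (convex_Icc _ _)
    (continuous_id.sub continuous_phi).continuousOn fun x hx => ?_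
  rw [interior_Icc] at hx
  have hd : HasDerivAt (fun x => x - phi x) (1 - (π - arccos x) / π) x :=
    (hasDerivAt_id' x).sub (hasDerivAt_phi hx.1 hx.2)
  rw [hd.deriv, show 1 - (π - arccos x) / π = arccos x / π by field_simp [pi_ne_zero]; ring]
  exact div_pos (arccos_pos.mpr hx.2) pi_pos

theorem lt_phi {ρ : ℝ} (h₁ : -1 ≤ ρ) (h₂ : ρ < 1) : ρ < phi ρ := by
  have h := strictMonoOn_sub_phi ⟨h₁, h₂.le⟩ ⟨by norm_num, le_rfl⟩ h₂
  simp only [phi_one, sub_self] at h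
  linarith

theorem stmt_16 :
    phi 1 = 1 ∧ StrictMonoOn phi (Set.Icc (0 : ℝ) 1) ∧
      ∀ ρ ∈ Set.Ico (0 : ℝ) 1,
        HasDerivAt phi ((π - Real.arccos ρ) / π) ρ ∧
          (π - Real.arccos ρ) / π < 1 ∧ ρ < phi ρ := by
  refine ⟨phi_one, strictMonoOn_phi.mono (Set.Icc_subset_Icc (by norm_num) le_rfl), ?_⟩
  rintro ρ ⟨h₀, h₁⟩
  have hρ : -1 ≤ ρ := by linarith
  refine ⟨hasDerivAt_phi (by linarith) h₁, ?_, lt_phi hρ h₁⟩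
  rw [div_lt_one pi_pos]
  linarith [arccos_pos.mpr h₁]
end

section
/- For every n ≥ 2 there exists a weight vector w ∈ ℝ^n such that the Boolean function f(x) = 1(⟨w,x⟩ > 0) on {0,1}^n maps the points p_i = (1,...,1,0,...,0) (with i ones followed by n−i zeros) to alternating outputs f(p_i) = (1 + (−1)^{i+1})/2 for i = 1,...,n. -/
private def g19 : ℕ → ℝ := fun k => if k = 0 then 0 else (-1) ^ (k - 1)

/-- For every `n ≥ 2` there is a bias-free perceptron on `{0,1}^n` whose outputs
alternate `1,0,1,0,…` along the chain of prefix-one points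
`p_i = (1,…,1,0,…,0)` (with `i+1` ones, for `i = 0,…,n-1`). -/
theorem stmt_19 (n : ℕ) (hn : 2 ≤ n) :
    ∃ w : Fin n → ℝ, ∀ i : Fin n,
      (if 0 < ∑ j : Fin n, w j * (if (j : ℕ) ≤ (i : ℕ) then (1 : ℝ) else 0)
        then (1 : ℝ) else 0) = (1 + (-1) ^ (i : ℕ)) / 2 := by
  refine ⟨fun j => g19 ((j : ℕ) + 1) - g19 (j : ℕ), fun i => ?_⟩
  have hsum : ∑ j : Fin n, (g19 ((j : ℕ) + 1) - g19 (j : ℕ)) *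
      (if (j : ℕ) ≤ (i : ℕ) then (1 : ℝ) else 0) = (-1) ^ (i : ℕ) := by
    have h1 : ∀ j : Fin n, (g19 ((j : ℕ) + 1) - g19 (j : ℕ)) *
        (if (j : ℕ) ≤ (i : ℕ) then (1 : ℝ) else 0)
        = g19 (min ((j : ℕ) + 1) ((i : ℕ) + 1)) - g19 (min (j : ℕ) ((i : ℕ) + 1)) := by
      intro j
      by_cases h : (j : ℕ) ≤ (i : ℕ)
      · rw [if_pos h, mul_one, min_eq_left (by omega), min_eq_left (by omega)]
      · rw [if_neg h, mul_zero, min_eq_right (by omega), min_eq_right (by omega), sub_self]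
    rw [Finset.sum_congr rfl (fun j _ => h1 j)]
    rw [Fin.sum_univ_eq_sum_range (fun k => g19 (min (k + 1) ((i : ℕ) + 1)) - g19 (min k ((i : ℕ) + 1)))]
    rw [Finset.sum_range_sub (fun k => g19 (min k ((i : ℕ) + 1)))]
    have hi : (i : ℕ) + 1 ≤ n := i.2
    rw [min_eq_right hi, min_eq_left (Nat.zero_le _)]
    simp [g19]
  rw [hsum]
  rcases Nat.even_or_odd (i : ℕ) with h | h
  · rw [h.neg_one_pow]; norm_num
  · rw [h.neg_one_pow]; norm_num
end
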